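/- Let M be a compact Riemannian manifold, let (X_t)_t be a C^1 flow on M, and let (Y_s)_s be a C^1 flow belonging to the C^1-centralizer of (X_t)_t. Then for every s ∈ ℝ and every hyperbolic critical element p of (X_t)_t (hyperbolic singularity or hyperbolic periodic point), the diffeomorphism Y_s maps the orbit γ_p = {X_t(p) : t ∈ ℝ} onto itself: Y_s(γ_p) = γ_p. -/

import Mathlib

open Set Filter Topology Manifold Metric

noncomputable section

variable {E : Type*} [NormedAddCommGroup E] [NormedSpace ℝ E]
  {H : Type*} [TopologicalSpace H] {I : ModelWithCorners ℝ E H}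
  {M : Type*} [TopologicalSpace M] [ChartedSpace H M] [IsManifold I (⊤ : ℕ∞) M]

/-- A (global, jointly continuous) flow on `M`. -/
def IsFlow (φ : ℝ → M → M) : Prop :=
  Continuous (fun p : ℝ × M => φ p.1 p.2) ∧ (∀ x, φ 0 x = x) ∧
    ∀ s t x, φ (s + t) x = φ s (φ t x)

variable (I) in
/-- `φ` is the flow generated by the vector field `X` (we identify `TangentSpace I x` with `E`). -/
def IsFlowOf (X : M → E) (φ : ℝ → M → M) : Prop :=
  IsFlow φ ∧ ∀ x t, HasMFDerivAt (𝓘(ℝ, ℝ)) I (fun s => φ s x) t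
    (ContinuousLinearMap.smulRight (1 : ℝ →L[ℝ] ℝ) (X (φ t x) : TangentSpace I (φ t x)))

variable (I) in
/-- The Lie bracket of two vector fields on a manifold, computed in the chart at `x`. -/
def mLieBracket (X Y : M → E) (x : M) : E :=
  VectorField.lieBracketWithin ℝ
    (fun y => mfderiv I (𝓘(ℝ, E)) (extChartAt I x) ((extChartAt I x).symm y)
      (X ((extChartAt I x).symm y)))
    (fun y => mfderiv I (𝓘(ℝ, E)) (extChartAt I x) ((extChartAt I x).symm y)
      (Y ((extChartAt I x).symm y)))
    (extChartAt I x).target (extChartAt I x x)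

variable (I) in
/-- `X` is a vector field of class `C^r` on `M`. -/
def IsCrVectorField (r : ℕ∞) (X : M → E) : Prop :=
  ContMDiff I I.tangent r (fun x => (⟨x, X x⟩ : TangentBundle I M))


variable (I) in
/-- The canonical identification of a tangent vector with an element of the model space. -/
def tvec {x : M} (v : TangentSpace I x) : E := v

/-- The orbit of a point under a flow. -/
def flowOrbit (φ : ℝ → M → M) (p : M) : Set M := range fun t => φ t p

/-- A periodic (non-equilibrium) point of a flow. -/
def IsPeriodicPoint (φ : ℝ → M → M) (p : M) : Prop :=
  (∃ T > 0, φ T p = p) ∧ ¬ (∀ t, φ t p = p)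

/-- The flow `φ` is (topologically) transitive on the invariant set `Λ`: some point of `Λ`
has dense forward orbit in `Λ`. -/
def TransitiveOn (φ : ℝ → M → M) (Λ : Set M) : Prop :=
  ∃ x ∈ Λ, Λ ⊆ closure {y | ∃ t : ℝ, 0 ≤ t ∧ φ t x = y}

variable (I) in
/-- The orbit of `p` is a hyperbolic periodic orbit of the flow `φ` generated by `X`:
there is a `Dφ_t`-invariant splitting `T M = Eˢ ⊕ E⁰ ⊕ Eᵘ` along the orbit, with `E⁰`
spanned by `X`, uniformly exponentially contracted on `Eˢ` and expanded on `Eᵘ`. -/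
def IsHyperbolicPeriodicOrbit (X : M → E) (φ : ℝ → M → M) (p : M) : Prop :=
  IsPeriodicPoint φ p ∧
  ∃ (Es Eu : M → Submodule ℝ E) (C lam : ℝ), 0 < C ∧ lam ∈ Set.Ioo (0:ℝ) 1 ∧
    ∀ x ∈ flowOrbit φ p,
      (Es x ⊔ Eu x ⊔ Submodule.span ℝ {X x} = ⊤) ∧
      (Es x ⊓ (Eu x ⊔ Submodule.span ℝ {X x}) = ⊥) ∧
      (Eu x ⊓ (Es x ⊔ Submodule.span ℝ {X x}) = ⊥) ∧
      (Submodule.span ℝ {X x} ⊓ (Es x ⊔ Eu x) = ⊥) ∧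
      (∀ (t : ℝ) (v : E), v ∈ Es x → tvec I (mfderiv I I (φ t) x (v : TangentSpace I x)) ∈ Es (φ t x)) ∧
      (∀ (t : ℝ) (v : E), v ∈ Eu x → tvec I (mfderiv I I (φ t) x (v : TangentSpace I x)) ∈ Eu (φ t x)) ∧
      (∀ t : ℝ, 0 ≤ t → ∀ v ∈ Es x,
        ‖tvec I (mfderiv I I (φ t) x (v : TangentSpace I x))‖ ≤ C * lam ^ t * ‖v‖) ∧
      (∀ t : ℝ, 0 ≤ t → ∀ v ∈ Eu x,
        ‖v‖ ≤ C * lam ^ t * ‖tvec I (mfderiv I I (φ t) x (v : TangentSpace I x))‖)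

/-- Two flows commute: `Y_s ∘ X_t = X_t ∘ Y_s` for all `s, t`. -/
def FlowsCommute (φ ψ : ℝ → M → M) : Prop :=
  ∀ (s t : ℝ) (x : M), ψ s (φ t x) = φ t (ψ s x)

variable (I) in
/-- A `C^1` flow on `M`: a flow which is `C^1` jointly in time and space. -/
def IsC1Flow (φ : ℝ → M → M) : Prop :=
  IsFlow φ ∧ ContMDiff ((𝓘(ℝ, ℝ)).prod I) I 1 (fun p : ℝ × M => φ p.1 p.2)

variable (I) in
/-- `p` is a hyperbolic singularity of the vector field `X` with flow `φ`: `X` vanishes at `p`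
and the linearized flow at `p` admits a hyperbolic splitting `T_pM = Eˢ ⊕ Eᵘ` (this is
equivalent to `DX(p)` having no purely imaginary eigenvalues). -/
def IsHyperbolicSingularity (X : M → E) (φ : ℝ → M → M) (p : M) : Prop :=
  X p = 0 ∧ (∀ t, φ t p = p) ∧
  ∃ (Es Eu : Submodule ℝ E) (C lam : ℝ), 0 < C ∧ lam ∈ Set.Ioo (0:ℝ) 1 ∧
    IsCompl Es Eu ∧
    (∀ (t : ℝ) (v : E), v ∈ Es → tvec I (mfderiv I I (φ t) p (v : TangentSpace I p)) ∈ Es) ∧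
    (∀ (t : ℝ) (v : E), v ∈ Eu → tvec I (mfderiv I I (φ t) p (v : TangentSpace I p)) ∈ Eu) ∧
    (∀ t : ℝ, 0 ≤ t → ∀ v ∈ Es,
      ‖tvec I (mfderiv I I (φ t) p (v : TangentSpace I p))‖ ≤ C * lam ^ t * ‖v‖) ∧
    (∀ t : ℝ, 0 ≤ t → ∀ v ∈ Eu,
      ‖v‖ ≤ C * lam ^ t * ‖tvec I (mfderiv I I (φ t) p (v : TangentSpace I p))‖)

variable (I) in
/-- A hyperbolic critical element: a hyperbolic singularity or a hyperbolic periodic orbit. -/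
def IsHyperbolicCriticalElement (X : M → E) (φ : ℝ → M → M) (p : M) : Prop :=
  IsHyperbolicSingularity I X φ p ∨ IsHyperbolicPeriodicOrbit I X φ p

/-!
Hyperbolicity provides a time `S` (a multiple of the period, or any time at a singularity) with
`C λ^S < 1`, so that contraction on `Eˢ` and expansion on `Eᵘ` leave `Dφ_S(p)` no nonzero fixed
vector in `W = Eˢ ⊕ Eᵘ`, a supplement of the flow direction `X p`. In a chart at `p`, the inverse
function theorem makes `(t, w) ↦ φ_t(p + w)` on `ℝ × W` open at `0` and
`w ↦ φ_S(p + w) - (p + w)` injective near `0`. A fixed point of `φ_S` close to `p` is thus `φ_t`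
of a fixed point on the slice `p + W`, which can only be `p`: near `p`, the fixed points of `φ_S`
lie on the orbit of `p`. As `ψ_s` commutes with `φ_S`, the curve `s ↦ ψ_s(p)` consists of fixed
points of `φ_S`, so lying on the orbit of `p` is a locally constant property of `s`, true for all
`s` by connectedness of `ℝ`; commuting with `φ_t` carries this from `p` to its whole orbit.
-/

open Function

namespace IsFlow

variable {N : Type*} [TopologicalSpace N] {φ : ℝ → N → N}

theorem apply_neg_apply (hφ : IsFlow φ) (t : ℝ) (x : N) : φ (-t) (φ t x) = x := by
  rw [← hφ.2.2, neg_add_cancel, hφ.2.1]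

theorem apply_apply_neg (hφ : IsFlow φ) (t : ℝ) (x : N) : φ t (φ (-t) x) = x := by
  simpa using hφ.apply_neg_apply (-t) x

theorem commute (hφ : IsFlow φ) (s t : ℝ) : Function.Commute (φ s) (φ t) := fun x => by
  rw [← hφ.2.2, add_comm, hφ.2.2]

theorem isFixedPt_natCast_mul (hφ : IsFlow φ) {T : ℝ} {p : N} (hp : IsFixedPt (φ T) p) (n : ℕ) :
    IsFixedPt (φ (n * T)) p := by
  induction n with
  | zero => simpa [IsFixedPt] using hφ.2.1 p
  | succ n ih =>
    rw [IsFixedPt, Nat.cast_succ, add_one_mul, hφ.2.2, hp, ih]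

theorem apply_mem_flowOrbit_iff (hφ : IsFlow φ) {t : ℝ} {x p : N} :
    φ t x ∈ flowOrbit φ p ↔ x ∈ flowOrbit φ p := by
  constructor
  · rintro ⟨r, hr⟩
    exact ⟨-t + r, by simp only [hφ.2.2, hr, hφ.apply_neg_apply]⟩
  · rintro ⟨r, rfl⟩
    exact ⟨t + r, hφ.2.2 t r p⟩

end IsFlow

theorem exists_natCast_mul_rpow_lt_one (C : ℝ) {lam T : ℝ} (hlam : lam ∈ Ioo (0 : ℝ) 1)
    (hT : 0 < T) : ∃ k : ℕ, C * lam ^ ((k : ℝ) * T) < 1 := by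
  have hlamT : lam ^ T < 1 := Real.rpow_lt_one hlam.1.le hlam.2 hT
  have hlim :=
    (tendsto_pow_atTop_nhds_zero_of_lt_one (Real.rpow_nonneg hlam.1.le T) hlamT).const_mul C
  rw [mul_zero] at hlim
  obtain ⟨k, hk⟩ := (hlim.eventually (gt_mem_nhds one_pos)).exists
  refine ⟨k, ?_⟩
  rwa [mul_comm (k : ℝ), Real.rpow_mul hlam.1.le, Real.rpow_natCast]

theorem eq_zero_of_mem_sup_of_apply_eq_self {A : E →ₗ[ℝ] E} {Es Eu : Submodule ℝ E} {κ : ℝ}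
    (hκ : κ < 1) (hinf : Es ⊓ Eu = ⊥)
    (hAs : ∀ v ∈ Es, A v ∈ Es) (hAu : ∀ v ∈ Eu, A v ∈ Eu)
    (hcs : ∀ v ∈ Es, ‖A v‖ ≤ κ * ‖v‖) (hcu : ∀ v ∈ Eu, ‖v‖ ≤ κ * ‖A v‖)
    {v : E} (hv : v ∈ Es ⊔ Eu) (hAv : A v = v) : v = 0 := by
  obtain ⟨a, ha, b, hb, rfl⟩ := Submodule.mem_sup.mp hv
  have hdiff : A a - a = b - A b := by
    rw [map_add] at hAv
    rw [sub_eq_sub_iff_add_eq_add, hAv, add_comm]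
  have hmem : A a - a ∈ Es ⊓ Eu :=
    ⟨Es.sub_mem (hAs a ha) ha, hdiff ▸ Eu.sub_mem hb (hAu b hb)⟩
  rw [hinf, Submodule.mem_bot] at hmem
  have hAa : A a = a := sub_eq_zero.mp hmem
  have hAb : A b = b := (sub_eq_zero.mp (hdiff ▸ hmem)).symm
  have ha0 : ‖a‖ ≤ 0 := by nlinarith [hAa ▸ hcs a ha, norm_nonneg a]
  have hb0 : ‖b‖ ≤ 0 := by nlinarith [hAb ▸ hcu b hb, norm_nonneg b]
  rw [norm_le_zero_iff.mp ha0, norm_le_zero_iff.mp hb0, add_zero]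

namespace FlowsCommute

variable {N : Type*} [TopologicalSpace N] {φ ψ : ℝ → N → N} {p : N}

theorem apply_mem_flowOrbit_of_eventually (hcomm : FlowsCommute φ ψ) (hφ : IsFlow φ)
    (hψ : IsFlow ψ) {S : ℝ} (hS : IsFixedPt (φ S) p)
    (hloc : ∀ᶠ x in 𝓝 p, IsFixedPt (φ S) x → x ∈ flowOrbit φ p) (s : ℝ) :
    ψ s p ∈ flowOrbit φ p := by
  have hnear : ∀ᶠ h in 𝓝 (0 : ℝ), ψ h p ∈ flowOrbit φ p := by
    have hcont : Continuous fun h => ψ h p := hψ.1.comp (continuous_id.prodMk continuous_const)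
    replace hcont : Tendsto (fun h => ψ h p) (𝓝 0) (𝓝 p) := by
      simpa [hψ.2.1] using hcont.tendsto 0
    filter_upwards [hcont.eventually hloc] with h hh using hh (hS.map (hcomm h S))
  have hstep : ∀ s h, ψ h p ∈ flowOrbit φ p →
      (ψ (s + h) p ∈ flowOrbit φ p ↔ ψ s p ∈ flowOrbit φ p) := by
    rintro s h ⟨r, hr⟩
    rw [hψ.2.2, ← hr, hcomm, hφ.apply_mem_flowOrbit_iff]
  have hlc : IsLocallyConstant fun s => ψ s p ∈ flowOrbit φ p := by
    refine (IsLocallyConstant.iff_eventually_eq _).2 fun s => ?_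
    have hsub : Tendsto (fun s' => s' - s) (𝓝 s) (𝓝 0) := by
      simpa using (continuous_sub_right s).tendsto s
    filter_upwards [hsub.eventually hnear] with s' hs'
    simpa using propext (hstep s (s' - s) hs')
  rw [hlc.apply_eq_of_preconnectedSpace s 0, hψ.2.1]
  exact ⟨0, hφ.2.1 p⟩

theorem image_flowOrbit_eq (hcomm : FlowsCommute φ ψ) (hφ : IsFlow φ) (hψ : IsFlow ψ)
    (hp : ∀ s, ψ s p ∈ flowOrbit φ p) (s : ℝ) : ψ s '' flowOrbit φ p = flowOrbit φ p := by
  have hmaps : ∀ s, MapsTo (ψ s) (flowOrbit φ p) (flowOrbit φ p) := by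
    rintro s _ ⟨t, rfl⟩
    exact (hcomm s t p).symm ▸ hφ.apply_mem_flowOrbit_iff.2 (hp s)
  exact (hmaps s).image_subset.antisymm fun x hx =>
    ⟨ψ (-s) x, hmaps (-s) hx, hψ.apply_apply_neg s x⟩

end FlowsCommute

theorem HasStrictFDerivAt.exists_mem_nhds_injOn {𝕜 F G : Type*} [NontriviallyNormedField 𝕜]
    [CompleteSpace 𝕜] [NormedAddCommGroup F] [NormedSpace 𝕜 F] [FiniteDimensional 𝕜 F]
    [NormedAddCommGroup G] [NormedSpace 𝕜 G] {f : F → G} {f' : F →L[𝕜] G} {a : F}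
    (hf : HasStrictFDerivAt f f' a) (hf' : Injective f') : ∃ s ∈ 𝓝 a, InjOn f s := by
  obtain ⟨K, hK, hf'K⟩ := (f' : F →ₗ[𝕜] G).injective_iff_antilipschitz.mp hf'
  obtain ⟨s, hs, hfs⟩ := hf.approximates_deriv_on_nhds (c := K⁻¹ / 2) (Or.inr (by positivity))
  refine ⟨s, hs, injOn_iff_injective.2 ?_⟩
  exact ((hf'K.domRestrict s).add_sub_lipschitzWith hfs.lipschitz_sub
    (half_lt_self (inv_pos.2 hK))).injective

section Charts

variable {N : Type*} [TopologicalSpace N] [ChartedSpace H N] {X : N → E} {φ : ℝ → N → N}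

theorem hasStrictFDerivAt_extChartAt_conj [I.Boundaryless] {f : N → N} {p : N}
    (hf : ContMDiffAt I I 1 f p) (hfp : IsFixedPt f p) :
    HasStrictFDerivAt (extChartAt I p ∘ f ∘ (extChartAt I p).symm) (mfderiv I I f p : E →L[ℝ] E)
      (extChartAt I p p) := by
  have h := (contMDiffAt_iff.mp hf).2
  rw [I.range_eq_univ, contDiffWithinAt_univ, hfp] at h
  rw [(hf.mdifferentiableAt one_ne_zero).mfderiv, I.range_eq_univ, fderivWithin_univ,
    writtenInExtChartAt, hfp]
  exact h.hasStrictFDerivAt one_ne_zero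

theorem IsFlowOf.hasFDerivAt_extChartAt (hX : IsFlowOf I X φ) (p : N) :
    HasFDerivAt (fun t => extChartAt I p (φ t p))
      (ContinuousLinearMap.smulRight (1 : ℝ →L[ℝ] ℝ) (X p)) 0 := by
  have h := (hX.2 p 0).2
  simp only [writtenInExtChartAt, extChartAt_model_space_eq_id, PartialEquiv.refl_symm,
    PartialEquiv.refl_coe, comp_id, id] at h
  rw [hX.1.2.1, modelWithCornersSelf_coe, range_id] at h
  exact hasFDerivWithinAt_univ.mp h

theorem IsC1Flow.contDiffAt_extChartAt [I.Boundaryless] (hφ : IsC1Flow I φ) (p : N) :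
    ContDiffAt ℝ 1 (fun q : ℝ × E => extChartAt I p (φ q.1 ((extChartAt I p).symm q.2)))
      (0, extChartAt I p p) := by
  have h := (contMDiffAt_iff.mp (hφ.2.contMDiffAt (x := (0, p)))).2
  simpa only [hφ.1.2.1, extChartAt_prod, extChartAt_model_space_eq_id,
    ModelWithCorners.range_prod, I.range_eq_univ, modelWithCornersSelf_coe, range_id,
    univ_prod_univ, contDiffWithinAt_univ, PartialEquiv.prod_symm, PartialEquiv.refl_symm,
    PartialEquiv.prod_coe, PartialEquiv.refl_coe, comp_def, id_eq] using h

theorem IsFlowOf.hasStrictFDerivAt_extChartAt [I.Boundaryless]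
    (hφ : IsC1Flow I φ) (hX : IsFlowOf I X φ) (p : N) :
    HasStrictFDerivAt (fun q : ℝ × E => extChartAt I p (φ q.1 ((extChartAt I p).symm q.2)))
      ((ContinuousLinearMap.smulRight (1 : ℝ →L[ℝ] ℝ) (X p)).coprod (ContinuousLinearMap.id ℝ E))
      (0, extChartAt I p p) := by
  have hF := (hφ.contDiffAt_extChartAt p).hasStrictFDerivAt one_ne_zero
  refine hF.congr_fderiv (ContinuousLinearMap.prod_ext ?_ ?_)
  · have htime := hF.hasFDerivAt.comp (0 : ℝ)
      (hasFDerivAt_prodMk_left (𝕜 := ℝ) (0 : ℝ) (extChartAt I p p))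
    simp only [comp_def, (extChartAt I p).left_inv (mem_extChartAt_source p)] at htime
    simpa using htime.unique (hX.hasFDerivAt_extChartAt p)
  · have hspace := hF.hasFDerivAt.comp (extChartAt I p p)
      (hasFDerivAt_prodMk_right (𝕜 := ℝ) (0 : ℝ) (extChartAt I p p))
    have hid : (fun y => extChartAt I p (φ 0 ((extChartAt I p).symm y))) =ᶠ[𝓝 (extChartAt I p p)]
        id := by
      filter_upwards [extChartAt_target_mem_nhds p] with y hy
      rw [hφ.1.2.1, (extChartAt I p).right_inv hy, id]
    simpa using hspace.unique ((hasFDerivAt_id (extChartAt I p p)).congr_of_eventuallyEq hid)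

theorem IsFlowOf.map_flowBox_nhds [I.Boundaryless] [FiniteDimensional ℝ E]
    (hφ : IsC1Flow I φ) (hX : IsFlowOf I X φ) (p : N) {W : Submodule ℝ E}
    (hW : W ⊔ Submodule.span ℝ {X p} = ⊤) :
    map (fun q : ℝ × W => extChartAt I p (φ q.1 ((extChartAt I p).symm (extChartAt I p p + q.2))))
      (𝓝 0) = 𝓝 (extChartAt I p p) := by
  set L := (ContinuousLinearMap.id ℝ ℝ).prodMap W.subtypeL
  have hshift : HasStrictFDerivAt (fun q : ℝ × W => ((0 : ℝ), extChartAt I p p) + L q) L 0 :=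
    L.hasStrictFDerivAt.const_add _
  have hF := hX.hasStrictFDerivAt_extChartAt hφ p
  rw [show ((0 : ℝ), extChartAt I p p) = ((0 : ℝ), extChartAt I p p) + L 0 by simp] at hF
  have hbox := hF.comp (0 : ℝ × W) hshift
  have hsurj : Surjective (((ContinuousLinearMap.smulRight (1 : ℝ →L[ℝ] ℝ) (X p)).coprod
      (ContinuousLinearMap.id ℝ E)).comp L) := by
    intro v
    obtain ⟨w, hw, y, hy, rfl⟩ := Submodule.mem_sup.mp (hW ▸ Submodule.mem_top (x := v))
    obtain ⟨r, rfl⟩ := Submodule.mem_span_singleton.mp hy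
    exact ⟨(r, ⟨w, hw⟩), by simp [L, add_comm]⟩
  convert hbox.map_nhds_eq_of_surj (LinearMap.range_eq_top.mpr hsurj) using 2
  · simp [L]
  · simp [hφ.1.2.1]

theorem eventually_eq_zero_of_isFixedPt_extChartAt_symm [I.Boundaryless] [FiniteDimensional ℝ E]
    {f : N → N} {p : N} (hf : ContMDiffAt I I 1 f p) (hfp : IsFixedPt f p) {W : Submodule ℝ E}
    (hW : ∀ v ∈ W, tvec I (mfderiv I I f p v) = v → v = 0) :
    ∀ᶠ w : W in 𝓝 0, extChartAt I p p + w ∈ (extChartAt I p).target →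
      IsFixedPt f ((extChartAt I p).symm (extChartAt I p p + w)) → w = 0 := by
  have hshift : HasStrictFDerivAt (fun w : W => extChartAt I p p + w) W.subtypeL 0 :=
    W.subtypeL.hasStrictFDerivAt.const_add _
  have hG := hasStrictFDerivAt_extChartAt_conj hf hfp
  rw [show extChartAt I p p = extChartAt I p p + ((0 : W) : E) by simp] at hG
  have hg := (hG.comp (0 : W) hshift).sub hshift
  have hD : Injective ((show E →L[ℝ] E from mfderiv I I f p).comp W.subtypeL - W.subtypeL) := by
    refine (injective_iff_map_eq_zero _).mpr fun w hw => Subtype.ext (hW w w.2 ?_)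
    rw [sub_apply, sub_eq_zero] at hw
    exact hw
  obtain ⟨s, hs, hinj⟩ := hg.exists_mem_nhds_injOn hD
  filter_upwards [hs] with w hws hw hfix
  refine hinj hws (mem_of_mem_nhds hs) ?_
  simp only [Pi.sub_apply, comp_apply, hfix.eq, (extChartAt I p).right_inv hw,
    ZeroMemClass.coe_zero, add_zero, (extChartAt I p).left_inv (mem_extChartAt_source p), hfp.eq,
    sub_self]

variable (I X φ) in
def HasNondegenerateReturn (p : N) (S : ℝ) : Prop :=
  IsFixedPt (φ S) p ∧ ∃ W : Submodule ℝ E, W ⊔ Submodule.span ℝ {X p} = ⊤ ∧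
    ∀ v ∈ W, tvec I (mfderiv I I (φ S) p v) = v → v = 0

variable {p : N}

theorem IsHyperbolicSingularity.exists_hasNondegenerateReturn
    (h : IsHyperbolicSingularity I X φ p) : ∃ S, HasNondegenerateReturn I X φ p S := by
  obtain ⟨hXp, hfix, Es, Eu, C, lam, -, hlam, hcompl, hs, hu, hcs, hcu⟩ := h
  obtain ⟨k, hk⟩ := exists_natCast_mul_rpow_lt_one C hlam one_pos
  rw [mul_one] at hk
  have hk0 : (0 : ℝ) ≤ k := k.cast_nonneg
  refine ⟨k, hfix _, Es ⊔ Eu, by simp [hXp, hcompl.sup_eq_top], fun v hv => ?_⟩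
  exact eq_zero_of_mem_sup_of_apply_eq_self (A := (show E →L[ℝ] E from mfderiv I I (φ k) p))
    hk hcompl.inf_eq_bot (hs _) (hu _) (hcs _ hk0) (hcu _ hk0) hv

theorem IsHyperbolicPeriodicOrbit.exists_hasNondegenerateReturn (hφ : IsFlow φ)
    (h : IsHyperbolicPeriodicOrbit I X φ p) : ∃ S, HasNondegenerateReturn I X φ p S := by
  obtain ⟨⟨⟨T, hT, hTp⟩, -⟩, Es, Eu, C, lam, -, hlam, hsplit⟩ := h
  obtain ⟨hsup, hinf, -, -, hs, hu, hcs, hcu⟩ := hsplit p ⟨0, hφ.2.1 p⟩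
  obtain ⟨k, hk⟩ := exists_natCast_mul_rpow_lt_one C hlam hT
  have hS := hφ.isFixedPt_natCast_mul hTp k
  have hS0 : (0 : ℝ) ≤ k * T := by positivity
  have hs' : ∀ v ∈ Es p, tvec I (mfderiv I I (φ (k * T)) p v) ∈ Es p := fun v hv => by
    have h := hs (k * T) v hv
    rwa [hS.eq] at h
  have hu' : ∀ v ∈ Eu p, tvec I (mfderiv I I (φ (k * T)) p v) ∈ Eu p := fun v hv => by
    have h := hu (k * T) v hv
    rwa [hS.eq] at h
  refine ⟨k * T, hS, Es p ⊔ Eu p, hsup, fun v hv => ?_⟩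
  exact eq_zero_of_mem_sup_of_apply_eq_self (A := (show E →L[ℝ] E from mfderiv I I (φ (k * T)) p))
    hk (eq_bot_mono (inf_le_inf_left _ le_sup_left) hinf) hs' hu' (hcs _ hS0) (hcu _ hS0) hv

theorem HasNondegenerateReturn.eventually_mem_flowOrbit [I.Boundaryless] [FiniteDimensional ℝ E]
    {S : ℝ} (hφ : IsC1Flow I φ) (hX : IsFlowOf I X φ) (h : HasNondegenerateReturn I X φ p S) :
    ∀ᶠ x in 𝓝 p, IsFixedPt (φ S) x → x ∈ flowOrbit φ p := by
  obtain ⟨hfix, W, hW, hinj⟩ := h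
  have hφS : ContMDiffAt I I 1 (φ S) p :=
    (hφ.2.comp (contMDiff_const.prodMk contMDiff_id)).contMDiffAt
  have hslice := eventually_eq_zero_of_isFixedPt_extChartAt_symm hφS hfix hinj
  have hshift : Continuous fun q : ℝ × W => extChartAt I p p + q.2 := by fun_prop
  have htarget : ∀ᶠ q : ℝ × W in 𝓝 0, extChartAt I p p + q.2 ∈ (extChartAt I p).target :=
    hshift.continuousAt.preimage_mem_nhds (by simpa using extChartAt_target_mem_nhds (I := I) p)
  have hsource : ∀ᶠ q : ℝ × W in 𝓝 0,
      φ q.1 ((extChartAt I p).symm (extChartAt I p p + q.2)) ∈ (extChartAt I p).source := by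
    have hcont : ContinuousAt
        (fun q : ℝ × W => φ q.1 ((extChartAt I p).symm (extChartAt I p p + q.2))) 0 := by
      refine hφ.1.1.continuousAt.comp (continuousAt_fst.prodMk ?_)
      refine ContinuousAt.comp ?_ hshift.continuousAt
      simpa using continuousAt_extChartAt_symm (I := I) p
    refine hcont.preimage_mem_nhds ?_
    simpa [hφ.1.2.1, (extChartAt I p).left_inv (mem_extChartAt_source p)]
      using extChartAt_source_mem_nhds (I := I) p
  have hbox := (hX.map_flowBox_nhds hφ p hW).ge
    (image_mem_map ((continuousAt_snd.eventually hslice).and (htarget.and hsource)))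
  filter_upwards [continuousAt_extChartAt p hbox, extChartAt_source_mem_nhds (I := I) p]
    with x ⟨⟨t, w⟩, ⟨hw, hwt, hws⟩, hx⟩ hxs hxfix
  have hxz : x = φ t ((extChartAt I p).symm (extChartAt I p p + w)) :=
    (extChartAt I p).injOn hxs hws hx.symm
  have hz : IsFixedPt (φ S) ((extChartAt I p).symm (extChartAt I p p + w)) := by
    simpa [hxz, hφ.1.apply_neg_apply] using hxfix.map (hφ.1.commute (-t) S)
  obtain rfl : w = 0 := hw hwt hz
  exact ⟨t, by simp [hxz]⟩

end Charts

theorem commuting_flow_preserves_hyperbolic_critical_orbits_general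
    [I.Boundaryless] [FiniteDimensional ℝ E]
    (φ : ℝ → M → M) (hφ : IsC1Flow I φ)
    (X : M → E) (hX : IsFlowOf I X φ)
    (ψ : ℝ → M → M) (hψ : IsC1Flow I ψ)
    (hcomm : FlowsCommute φ ψ)
    (p : M) (hp : IsHyperbolicCriticalElement I X φ p) :
    ∀ s : ℝ, ψ s '' flowOrbit φ p = flowOrbit φ p := by
  obtain ⟨S, hS⟩ : ∃ S, HasNondegenerateReturn I X φ p S :=
    hp.elim IsHyperbolicSingularity.exists_hasNondegenerateReturn
      (·.exists_hasNondegenerateReturn hφ.1)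
  exact hcomm.image_flowOrbit_eq hφ.1 hψ.1
    (hcomm.apply_mem_flowOrbit_of_eventually hφ.1 hψ.1 hS.1 (hS.eventually_mem_flowOrbit hφ hX))

/-- **Lemma.** If the `C^1` flow `(Y_s)_s` belongs to the `C^1`-centralizer of the `C^1` flow
`(X_t)_t` on a compact Riemannian manifold, then for every `s ∈ ℝ` and every hyperbolic
critical element `p` of `(X_t)_t`, the diffeomorphism `Y_s` maps the orbit `γ_p` onto
itself. -/
theorem commuting_flow_preserves_hyperbolic_critical_orbits
    [CompactSpace M] [I.Boundaryless] [FiniteDimensional ℝ E]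
    (φ : ℝ → M → M) (hφ : IsC1Flow I φ)
    (X : M → E) (hX : IsFlowOf I X φ)
    (ψ : ℝ → M → M) (hψ : IsC1Flow I ψ)
    (hcomm : FlowsCommute φ ψ)
    (p : M) (hp : IsHyperbolicCriticalElement I X φ p) :
    ∀ s : ℝ, ψ s '' flowOrbit φ p = flowOrbit φ p :=
  commuting_flow_preserves_hyperbolic_critical_orbits_general φ hφ X hX ψ hψ hcomm p hp
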